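/- Let U be a finite set of integers each at least 3 and let 𝒟 be a family of nonempty subsets of U; consider the forest F = F(U,𝒟). If R and R' are clean subsets of V(F) with |R ∖ R'| = |R' ∖ R| = 1, then {D ∈ 𝒟 : T_D is full under R} = {D ∈ 𝒟 : T_D is full under R'}. -/

import Mathlib

/-! The forest `F = F(U, 𝒟)` for a finite set `U` of integers (each at least 3) and a
family `𝒟` of nonempty subsets of `U`.  For each `D ∈ 𝒟` it has a tree `T_D`
consisting of a root, two antennae (leaves attached to the root) and, for each
`d ∈ D`, a star with center adjacent to the root and exactly `d` star leaves;
in addition there are eight isolated vertices.  We realise the vertex set as the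
valid vertices of the following inductive type. -/

/-- Potential vertices of the forest `F(U, 𝒟)`. -/
inductive FV where
  /-- the eight isolated vertices (`n < 8`) -/
  | iso : ℕ → FV
  /-- the root of the tree `T_D` -/
  | root : Finset ℕ → FV
  /-- the two antennae of `T_D` (`a < 2`) -/
  | antenna : Finset ℕ → ℕ → FV
  /-- the center of the star of `T_D` corresponding to `d ∈ D` -/
  | center : Finset ℕ → ℕ → FV
  /-- the `j`-th star leaf (`j < d`) of the star of `T_D` corresponding to `d ∈ D` -/
  | leaf : Finset ℕ → ℕ → ℕ → FV
deriving DecidableEq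

/-- The vertices of the forest `F(U, 𝒟)` are exactly the valid ones. -/
def FV.valid (𝒟 : Finset (Finset ℕ)) : FV → Prop
  | .iso n => n < 8
  | .root D => D ∈ 𝒟
  | .antenna D a => D ∈ 𝒟 ∧ a < 2
  | .center D d => D ∈ 𝒟 ∧ d ∈ D
  | .leaf D d j => D ∈ 𝒟 ∧ d ∈ D ∧ j < d

/-- Star leaves. -/
def FV.isStarLeaf : FV → Bool
  | .leaf _ _ _ => true
  | _ => false

/-- The star of `T_D` for `d ∈ D` is full under `R`: `R` contains all its star leaves. -/
def starFull (D : Finset ℕ) (d : ℕ) (R : Finset FV) : Prop :=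
  ∀ j < d, FV.leaf D d j ∈ R

/-- The star of `T_D` for `d ∈ D` is empty under `R`: `R` contains none of its star leaves. -/
def starEmpty (D : Finset ℕ) (d : ℕ) (R : Finset FV) : Prop :=
  ∀ j < d, FV.leaf D d j ∉ R

/-- A star is clean if it is full or empty. -/
def starClean (D : Finset ℕ) (d : ℕ) (R : Finset FV) : Prop :=
  starFull D d R ∨ starEmpty D d R

/-- The tree `T_D` is full under `R`: `R` contains all star leaves of `T_D`. -/
def treeFull (D : Finset ℕ) (R : Finset FV) : Prop :=
  ∀ d ∈ D, starFull D d R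

/-- The tree `T_D` is empty under `R`: `R` contains no star leaf of `T_D`. -/
def treeEmpty (D : Finset ℕ) (R : Finset FV) : Prop :=
  ∀ d ∈ D, starEmpty D d R

/-- A tree is clean if it is full or empty. -/
def treeClean (D : Finset ℕ) (R : Finset FV) : Prop :=
  treeFull D R ∨ treeEmpty D R

/-- The tree `T_D` is marked by `R`: both its antennae belong to `R`. -/
def treeMarked (D : Finset ℕ) (R : Finset FV) : Prop :=
  FV.antenna D 0 ∈ R ∧ FV.antenna D 1 ∈ R

instance (D : Finset ℕ) (d : ℕ) (R : Finset FV) : Decidable (starFull D d R) := by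
  unfold starFull; infer_instance

instance (D : Finset ℕ) (R : Finset FV) : Decidable (treeFull D R) := by
  unfold treeFull; infer_instance

/-- A set `R ⊆ V(F)` is clean: exactly eight vertices of `R` are not star leaves
and every tree `T_D` (`D ∈ 𝒟`) is clean under `R`. -/
def CleanSet (𝒟 : Finset (Finset ℕ)) (R : Finset FV) : Prop :=
  (R.filter (fun v => v.isStarLeaf = false)).card = 8 ∧ ∀ D ∈ 𝒟, treeClean D R

/-- A set `R ⊆ V(F)` is feasible: either it is clean, or exactly eight of its
vertices are not star leaves, exactly three trees `T_{D1}, T_{D2}, T_{D3}` are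
marked, every other tree is clean, `T_{D1}` is not clean, `T_{D3}` is clean, every
non-clean tree is `T_{D1}` or `T_{D2}`, exactly two stars are marked—one of
`T_{D1}` and one of `T_{D2}`—the marked star of `T_{D1}` is clean iff the marked
star of `T_{D2}` is, and every unmarked star is clean. -/
def FeasibleSet (𝒟 : Finset (Finset ℕ)) (R : Finset FV) : Prop :=
  CleanSet 𝒟 R ∨
  ((R.filter (fun v => v.isStarLeaf = false)).card = 8 ∧
    ∃ D1 ∈ 𝒟, ∃ D2 ∈ 𝒟, ∃ D3 ∈ 𝒟, D1 ≠ D2 ∧ D1 ≠ D3 ∧ D2 ≠ D3 ∧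
      treeMarked D1 R ∧ treeMarked D2 R ∧ treeMarked D3 R ∧
      (∀ D ∈ 𝒟, treeMarked D R → D = D1 ∨ D = D2 ∨ D = D3) ∧
      (∀ D ∈ 𝒟, D ≠ D1 → D ≠ D2 → D ≠ D3 → treeClean D R) ∧
      ¬ treeClean D1 R ∧ treeClean D3 R ∧
      (∀ D ∈ 𝒟, ¬ treeClean D R → D = D1 ∨ D = D2) ∧
      ∃ d1 ∈ D1, ∃ d2 ∈ D2,
        FV.center D1 d1 ∈ R ∧ FV.center D2 d2 ∈ R ∧
        (∀ D ∈ 𝒟, ∀ d ∈ D, FV.center D d ∈ R →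
          (D = D1 ∧ d = d1) ∨ (D = D2 ∧ d = d2)) ∧
        (starClean D1 d1 R ↔ starClean D2 d2 R) ∧
        (∀ D ∈ 𝒟, ∀ d ∈ D, FV.center D d ∉ R → starClean D d R))

/-- `TJFeasSeq 𝒟 seq ℓ S S'` : `seq 0, …, seq ℓ` is a TJ-sequence of feasible subsets
of `V(F)` from `S` to `S'`. -/
def TJFeasSeq (𝒟 : Finset (Finset ℕ)) (seq : ℕ → Finset FV) (ℓ : ℕ)
    (S S' : Finset FV) : Prop :=
  seq 0 = S ∧ seq ℓ = S' ∧
    (∀ i ≤ ℓ, (∀ v ∈ seq i, v.valid 𝒟) ∧ FeasibleSet 𝒟 (seq i)) ∧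
    ∀ i < ℓ, (seq i \ seq (i + 1)).card = 1 ∧ (seq (i + 1) \ seq i).card = 1

/-- The star leaves of the tree `T_D`, as a finset. -/
def leavesOf (D : Finset ℕ) : Finset FV :=
  D.biUnion fun d => (Finset.range d).image fun j => FV.leaf D d j

/-- The eight isolated vertices of the forest, as a finset. -/
def isoVerts : Finset FV := (Finset.range 8).image FV.iso

/-- The token set associated with a subfamily `𝒞`: the eight isolated vertices
together with all star leaves of `T_D` for all `D ∈ 𝒞`. -/
def tokenSet (𝒞 : Finset (Finset ℕ)) : Finset FV := isoVerts ∪ 𝒞.biUnion leavesOf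

/-- A family `C` of subsets of a finite set `U` is an exact cover of `U` if its
members are pairwise disjoint and their union is `U`. -/
def ExactCover (U : Finset ℕ) (C : Finset (Finset ℕ)) : Prop :=
  (∀ A ∈ C, ∀ B ∈ C, A ≠ B → Disjoint A B) ∧ C.biUnion id = U

/-- `C2` is obtained from `C1` by a split (equivalently `C1` from `C2` by a merge). -/
def SplitOf (C1 C2 : Finset (Finset ℕ)) : Prop :=
  ∃ D1 D2 D3 : Finset ℕ, D2 ≠ D3 ∧ C1 \ C2 = {D1} ∧ C2 \ C1 = {D2, D3}

/-- `C2` is obtained from `C1` by a split or by a merge. -/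
def SplitOrMerge (C1 C2 : Finset (Finset ℕ)) : Prop :=
  SplitOf C1 C2 ∨ SplitOf C2 C1

lemma card_le_card_sdiff_of_starFull_of_starEmpty {D : Finset ℕ} {d : ℕ} {R R' : Finset FV}
    (hR : starFull D d R) (hR' : starEmpty D d R') : d ≤ (R \ R').card := by
  have hsub : (Finset.range d).image (FV.leaf D d) ⊆ R \ R' := by
    intro v hv
    obtain ⟨j, hj, rfl⟩ := Finset.mem_image.1 hv
    exact Finset.mem_sdiff.2 ⟨hR j (Finset.mem_range.1 hj), hR' j (Finset.mem_range.1 hj)⟩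
  calc d = ((Finset.range d).image (FV.leaf D d)).card := by
        rw [Finset.card_image_of_injective _ fun _ _ h => FV.leaf.inj h |>.2.2, Finset.card_range]
    _ ≤ (R \ R').card := Finset.card_le_card hsub

lemma treeFull_of_treeClean_of_card_sdiff_lt {D : Finset ℕ} {d : ℕ} {R R' : Finset FV}
    (hd : d ∈ D) (hcard : (R \ R').card < d) (hR : treeFull D R) (hR' : treeClean D R') :
    treeFull D R' :=
  hR'.resolve_right fun hempty =>
    hcard.not_ge (card_le_card_sdiff_of_starFull_of_starEmpty (hR d hd) (hempty d hd))

theorem stmt14_general (U : Finset ℕ) (hU : ∀ u ∈ U, 3 ≤ u)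
    (𝒟 : Finset (Finset ℕ)) (h𝒟 : ∀ D ∈ 𝒟, D ⊆ U ∧ D.Nonempty)
    (R R' : Finset FV)
    (hR : CleanSet 𝒟 R) (hR' : CleanSet 𝒟 R')
    (h1 : (R \ R').card = 1) (h2 : (R' \ R).card = 1) :
    𝒟.filter (fun D => treeFull D R) = 𝒟.filter (fun D => treeFull D R') := by
  ext D
  simp only [Finset.mem_filter, and_congr_right_iff]
  intro hD
  obtain ⟨hDU, d, hd⟩ := h𝒟 D hD
  have hd3 : 3 ≤ d := hU d (hDU hd)
  exact ⟨fun hfull => treeFull_of_treeClean_of_card_sdiff_lt hd (by omega) hfull (hR'.2 D hD),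
    fun hfull => treeFull_of_treeClean_of_card_sdiff_lt hd (by omega) hfull (hR.2 D hD)⟩

/-- In the forest `F(U, 𝒟)`, if `R` and `R'` are clean subsets of
`V(F)` with `|R \ R'| = |R' \ R| = 1`, then the same trees `T_D` are full under
`R` and under `R'`. -/
theorem stmt14 (U : Finset ℕ) (hU : ∀ u ∈ U, 3 ≤ u)
    (𝒟 : Finset (Finset ℕ)) (h𝒟 : ∀ D ∈ 𝒟, D ⊆ U ∧ D.Nonempty)
    (R R' : Finset FV)
    (hRv : ∀ v ∈ R, v.valid 𝒟) (hR'v : ∀ v ∈ R', v.valid 𝒟)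
    (hR : CleanSet 𝒟 R) (hR' : CleanSet 𝒟 R')
    (h1 : (R \ R').card = 1) (h2 : (R' \ R).card = 1) :
    𝒟.filter (fun D => treeFull D R) = 𝒟.filter (fun D => treeFull D R') :=
  stmt14_general U hU 𝒟 h𝒟 R R' hR hR' h1 h2
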